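/- Let ★ be a semistar operation of finite type on an integral domain D. Then ★ is e.a.b. if and only if ★ is a.b. -/

import Mathlib

variable (D : Type*) [CommRing D] [IsDomain D]

/-- A semistar operation on an integral domain `D`: a map on the nonzero
`D`-submodules of the quotient field `K` satisfying `(zE)★ = zE★` (where
`zE = span{z}·E`), monotonicity, extensivity and idempotence. -/
def IsSemistarOp (s : Submodule D (FractionRing D) → Submodule D (FractionRing D)) : Prop :=
  (∀ z : FractionRing D, z ≠ 0 → ∀ E : Submodule D (FractionRing D), E ≠ ⊥ →
      s (Submodule.span D {z} * E) = Submodule.span D {z} * s E) ∧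
  (∀ E F : Submodule D (FractionRing D), E ≠ ⊥ → F ≠ ⊥ → E ≤ F → s E ≤ s F) ∧
  (∀ E : Submodule D (FractionRing D), E ≠ ⊥ → E ≤ s E) ∧
  (∀ E : Submodule D (FractionRing D), E ≠ ⊥ → s (s E) = s E)

/-- `★` is of finite type: `E★` is the union of the `F★` over the nonzero finitely
generated (fractional) `F ⊆ E`. -/
def IsFiniteType (s : Submodule D (FractionRing D) → Submodule D (FractionRing D)) : Prop :=
  ∀ E : Submodule D (FractionRing D), E ≠ ⊥ →
    s E = ⨆ (F : Submodule D (FractionRing D)) (_ : F ≤ E) (_ : F ≠ ⊥) (_ : F.FG), s F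

/-- `★` is e.a.b.: cancellation `(FG)★ ⊆ (FH)★ ⟹ G★ ⊆ H★` for nonzero finitely
generated `F`, `G`, `H`. -/
def IsEab (s : Submodule D (FractionRing D) → Submodule D (FractionRing D)) : Prop :=
  ∀ F G H : Submodule D (FractionRing D), F ≠ ⊥ → F.FG → G ≠ ⊥ → G.FG → H ≠ ⊥ → H.FG →
    s (F * G) ≤ s (F * H) → s G ≤ s H

/-- `★` is a.b.: cancellation `(FG)★ ⊆ (FH)★ ⟹ G★ ⊆ H★` for nonzero finitely
generated `F` and arbitrary nonzero `D`-submodules `G`, `H` of `K`. -/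
def IsAb (s : Submodule D (FractionRing D) → Submodule D (FractionRing D)) : Prop :=
  ∀ F G H : Submodule D (FractionRing D), F ≠ ⊥ → F.FG → G ≠ ⊥ → H ≠ ⊥ →
    s (F * G) ≤ s (F * H) → s G ≤ s H

namespace SemistarAux

variable {D}


/-- product of nonzero submodules of the fraction field is nonzero -/
lemma mul_ne_bot (F G : Submodule D (FractionRing D)) (hF : F ≠ ⊥) (hG : G ≠ ⊥) :
    F * G ≠ ⊥ := by
  obtain ⟨x, hxF, hx⟩ := F.ne_bot_iff.mp hF
  obtain ⟨y, hyG, hy⟩ := G.ne_bot_iff.mp hG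
  exact (F * G).ne_bot_iff.mpr ⟨x * y, Submodule.mul_mem_mul hxF hyG, mul_ne_zero hx hy⟩

/-- the set of nonzero f.g. submodules below E -/
def fam (E : Submodule D (FractionRing D)) : Set (Submodule D (FractionRing D)) :=
  {J | J ≤ E ∧ J ≠ ⊥ ∧ J.FG}

lemma fam_nonempty {E : Submodule D (FractionRing D)} (hE : E ≠ ⊥) : (fam E).Nonempty := by
  obtain ⟨x, hxE, hx⟩ := E.ne_bot_iff.mp hE
  refine ⟨Submodule.span D {x}, Submodule.span_le.mpr (by simpa using hxE), ?_, Submodule.fg_span_singleton x⟩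
  simp [Submodule.span_singleton_eq_bot, hx]

lemma fam_directed (E : Submodule D (FractionRing D)) : DirectedOn (· ≤ ·) (fam E) := by
  rintro J₁ ⟨h₁E, h₁b, h₁fg⟩ J₂ ⟨h₂E, h₂b, h₂fg⟩
  refine ⟨J₁ ⊔ J₂, ⟨sup_le h₁E h₂E, ?_, h₁fg.sup h₂fg⟩, le_sup_left, le_sup_right⟩
  intro h
  exact h₁b (by simpa using (le_of_eq h).trans' (le_sup_left : J₁ ≤ J₁ ⊔ J₂) |> le_bot_iff.mp)

lemma sSup_fam (E : Submodule D (FractionRing D)) (hE : E ≠ ⊥) : sSup (fam E) = E := by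
  apply le_antisymm (sSup_le fun J hJ => hJ.1)
  intro x hxE
  obtain ⟨y, hyE, hy⟩ := E.ne_bot_iff.mp hE
  have hmem : Submodule.span D {x, y} ∈ fam E := by
    refine ⟨Submodule.span_le.mpr ?_, ?_, Submodule.fg_span (Set.toFinite _)⟩
    · rintro z (rfl | rfl) <;> assumption
    · intro h
      have : y ∈ (⊥ : Submodule D (FractionRing D)) := by
        rw [← h]; exact Submodule.subset_span (by simp)
      simp at this; exact hy this
  exact le_sSup hmem (Submodule.subset_span (by simp))

end SemistarAux


/-- A semistar operation of finite type is e.a.b. iff it is a.b. -/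
theorem finiteType_eab_iff_ab
    (s : Submodule D (FractionRing D) → Submodule D (FractionRing D))
    (hs : IsSemistarOp D s) (hft : IsFiniteType D s) :
    IsEab D s ↔ IsAb D s := by

  constructor
  · -- eab → ab
    intro heab F G H hF hFfg hG hH hle
    have hmono := hs.2.1
    have hext := hs.2.2.1
    have hidem := hs.2.2.2
    -- rewrite s G as sSup of the image of the family
    have hGsup : s G = sSup (s '' SemistarAux.fam G) := by
      rw [hft G hG]
      apply le_antisymm
      · refine iSup_le fun J => iSup_le fun hJG => iSup_le fun hJb => iSup_le fun hJfg => ?_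
        exact le_sSup ⟨J, ⟨hJG, hJb, hJfg⟩, rfl⟩
      · refine sSup_le ?_
        rintro _ ⟨J, ⟨hJG, hJb, hJfg⟩, rfl⟩
        exact le_iSup_of_le J (le_iSup_of_le hJG (le_iSup_of_le hJb (le_iSup_of_le hJfg le_rfl)))
    rw [hGsup]
    refine sSup_le ?_
    rintro _ ⟨G', ⟨hG'G, hG'b, hG'fg⟩, rfl⟩
    -- directedness of images under s
    have himdir : ∀ E : Submodule D (FractionRing D), E ≠ ⊥ →
        DirectedOn (· ≤ ·) (s '' SemistarAux.fam E) := by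
      intro E hE
      rintro _ ⟨J₁, hJ₁, rfl⟩ _ ⟨J₂, hJ₂, rfl⟩
      obtain ⟨J₃, hJ₃, h₁₃, h₂₃⟩ := SemistarAux.fam_directed E J₁ hJ₁ J₂ hJ₂
      exact ⟨s J₃, ⟨J₃, hJ₃, rfl⟩, hmono _ _ hJ₁.2.1 hJ₃.2.1 h₁₃,
        hmono _ _ hJ₂.2.1 hJ₃.2.1 h₂₃⟩
    have hFH : F * H ≠ ⊥ := SemistarAux.mul_ne_bot F H hF hH
    have hFG : F * G ≠ ⊥ := SemistarAux.mul_ne_bot F G hF hG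
    have hFG' : F * G' ≠ ⊥ := SemistarAux.mul_ne_bot F G' hF hG'b
    -- F * G' ≤ s (F * H)
    have h1 : F * G' ≤ s (F * H) :=
      le_trans (mul_le_mul_right hG'G F)
        (le_trans (hext _ hFG) hle)
    -- s (F*H) = sSup of image family
    have h2 : s (F * H) = sSup (s '' SemistarAux.fam (F * H)) := by
      rw [hft _ hFH]
      apply le_antisymm
      · refine iSup_le fun J => iSup_le fun hJG => iSup_le fun hJb => iSup_le fun hJfg => ?_
        exact le_sSup ⟨J, ⟨hJG, hJb, hJfg⟩, rfl⟩
      · refine sSup_le ?_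
        rintro _ ⟨J, ⟨hJG, hJb, hJfg⟩, rfl⟩
        exact le_iSup_of_le J (le_iSup_of_le hJG (le_iSup_of_le hJb (le_iSup_of_le hJfg le_rfl)))
    -- extract J by compactness of F*G'
    have hcomp : IsCompactElement (F * G') :=
      (Submodule.fg_iff_compact _).mp (hFfg.mul hG'fg)
    obtain ⟨_, ⟨J, hJfam, rfl⟩, hJle⟩ :=
      (CompleteLattice.isCompactElement_iff_le_of_directed_sSup_le _ (F * G')).mp hcomp _
        ((SemistarAux.fam_nonempty hFH).image s) (himdir _ hFH) (h1.trans (le_of_eq h2))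
    obtain ⟨hJFH, hJb, hJfg⟩ := hJfam
    -- now J ≤ F * H = sSup {F * H' | H' ∈ fam H}; extract H'
    have hFHsup : F * H = sSup ((fun H' => F * H') '' SemistarAux.fam H) := by
      conv_lhs => rw [← SemistarAux.sSup_fam H hH]
      rw [sSup_eq_iSup', Submodule.mul_iSup, sSup_image, iSup_subtype]
    have hmuldir : DirectedOn (· ≤ ·) ((fun H' => F * H') '' SemistarAux.fam H) := by
      rintro _ ⟨H₁, hH₁, rfl⟩ _ ⟨H₂, hH₂, rfl⟩
      obtain ⟨H₃, hH₃, h₁₃, h₂₃⟩ := SemistarAux.fam_directed H H₁ hH₁ H₂ hH₂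
      exact ⟨F * H₃, ⟨H₃, hH₃, rfl⟩, mul_le_mul_right h₁₃ F,
        mul_le_mul_right h₂₃ F⟩
    have hJcomp : IsCompactElement J := (Submodule.fg_iff_compact _).mp hJfg
    obtain ⟨_, ⟨H', hH'fam, rfl⟩, hH'le⟩ :=
      (CompleteLattice.isCompactElement_iff_le_of_directed_sSup_le _ J).mp hJcomp _
        ((SemistarAux.fam_nonempty hH).image _) hmuldir (hJFH.trans (le_of_eq hFHsup))
    obtain ⟨hH'H, hH'b, hH'fg⟩ := hH'fam
    have hFH' : F * H' ≠ ⊥ := SemistarAux.mul_ne_bot F H' hF hH'b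
    -- s (F * G') ≤ s (F * H')
    have hsFH'b : s (F * H') ≠ ⊥ := fun hb => hFH' (le_bot_iff.mp ((hext _ hFH').trans hb.le))
    have hJs : J ≤ s (F * H') := hH'le.trans (hext _ hFH')
    have h4 : F * G' ≤ s (F * H') :=
      hJle.trans ((hmono J (s (F * H')) hJb hsFH'b hJs).trans_eq (hidem _ hFH'))
    have h3 : s (F * G') ≤ s (F * H') :=
      (hmono (F * G') (s (F * H')) hFG' hsFH'b h4).trans_eq (hidem _ hFH')
    exact (heab F G' H' hF hFfg hG'b hG'fg hH'b hH'fg h3).trans (hmono H' H hH'b hH hH'H)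
  · -- ab → eab
    intro hab F G H hF hFfg hG _ hH _ hle
    exact hab F G H hF hFfg hG hH hle
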